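/- Let g_n denote the number of 132-avoiding revised ascent sequences of length n, and let s_n denote the number of 132-avoiding revised ascent sequences x of length n with x_{n−1} < max(x) and x_n = max(x). Then for all n ≥ 2, s_n = Σ_{k ≥ 1} g_{n−1−k} (with g_j = 0 for j ≤ 0). -/

import Mathlib

/-!
Let `x` end in its maximum `M` with penultimate entry `k < M`. As `x_{n-1} < x_n`, the entry `k`
is new, so by `132`-avoidance the entries before it form a block of values above `k` followed by a
block of values below `k`. The entries of the second block are new, hence ascent bottoms, so that
block together with `k` increases; as it must contain every value `1, …, k`, it is `1, 2, …, k`.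
Hence `x = (y + k) 1 2 ⋯ k (max y + k)`, where `y` has length `n - 1 - k ≥ 1` (the last entry `M`
repeats an earlier one, which lies in the first block), and `x` is a `132`-avoiding revised ascent
sequence exactly when `y` is one. Counting by `k` gives the sum.
-/

/-- An endofunction of size `n`: values in `{1,…,n}` (indices are `Fin n`, 0-based). -/
def IsEndo (n : ℕ) (x : Fin n → ℕ) : Prop := ∀ i, 1 ≤ x i ∧ x i ≤ n

/-- The maximum value of `x`. -/
def maxVal (n : ℕ) (x : Fin n → ℕ) : ℕ := Finset.univ.sup x

/-- A Cayley permutation: an endofunction whose image is `{1,…,max x}`. -/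
def IsCayley (n : ℕ) (x : Fin n → ℕ) : Prop :=
  IsEndo n x ∧ ∀ v, 1 ≤ v → v ≤ maxVal n x → ∃ i, x i = v

/-- Ascent bottoms (0-based; index 0 always included). -/
def Ascbot (n : ℕ) (x : Fin n → ℕ) : Set (Fin n) :=
  {i | i.1 = 0 ∨ ∃ h : i.1 + 1 < n, x i < x ⟨i.1 + 1, h⟩}

/-- Indices of leftmost occurrences of values. -/
def Nub (n : ℕ) (x : Fin n → ℕ) : Set (Fin n) :=
  {i | ∀ j, j < i → x j ≠ x i}

/-- A revised ascent sequence. -/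
def IsRAS (n : ℕ) (x : Fin n → ℕ) : Prop :=
  IsCayley n x ∧ Ascbot n x = Nub n x

/-- `x` avoids the pattern `132`. -/
def Avoids132 (n : ℕ) (x : Fin n → ℕ) : Prop :=
  ¬ ∃ i j k : Fin n, i < j ∧ j < k ∧ x i < x k ∧ x k < x j

/-- `g n` : the number of `132`-avoiding revised ascent sequences of length `n`,
with the convention `g 0 = 0`. -/
noncomputable def g : ℕ → ℕ
  | 0 => 0
  | n + 1 => {x : Fin (n + 1) → ℕ | IsRAS (n + 1) x ∧ Avoids132 (n + 1) x}.ncard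

/-- `s n` : the number of `132`-avoiding revised ascent sequences `x` of length `n`
with `x (n-1) < max x` and `x n = max x` (1-based indexing in the paper). -/
noncomputable def s (n : ℕ) : ℕ :=
  {x : Fin n → ℕ | IsRAS n x ∧ Avoids132 n x ∧
    ∃ h : 2 ≤ n,
      x ⟨n - 2, by omega⟩ < maxVal n x ∧ x ⟨n - 1, by omega⟩ = maxVal n x}.ncard

open Finset

lemma le_maxVal {n : ℕ} (x : Fin n → ℕ) (i : Fin n) : x i ≤ maxVal n x :=
  le_sup (mem_univ i)

lemma exists_eq_maxVal {n : ℕ} (x : Fin n → ℕ) (hn : 0 < n) : ∃ i, x i = maxVal n x := by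
  obtain ⟨i, -, hi⟩ := exists_mem_eq_sup univ (univ_nonempty_iff.2 ⟨⟨0, hn⟩⟩) x
  exact ⟨i, hi.symm⟩

lemma maxVal_le_of_forall_exists_eq {n : ℕ} {x : Fin n → ℕ}
    (hx : ∀ v, 1 ≤ v → v ≤ maxVal n x → ∃ i, x i = v) : maxVal n x ≤ n :=
  calc maxVal n x = #(Icc 1 (maxVal n x)) := by simp
    _ ≤ #(univ.image x) := card_le_card fun v hv => by
        obtain ⟨i, hi⟩ := hx v (mem_Icc.1 hv).1 (mem_Icc.1 hv).2
        exact mem_image.2 ⟨i, mem_univ i, hi⟩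
    _ ≤ n := card_image_le.trans (card_univ.trans (Fintype.card_fin n)).le

lemma isCayley_iff {n : ℕ} {x : Fin n → ℕ} :
    IsCayley n x ↔ (∀ i, 1 ≤ x i) ∧ ∀ v, 1 ≤ v → v ≤ maxVal n x → ∃ i, x i = v :=
  ⟨fun h => ⟨fun i => (h.1 i).1, h.2⟩, fun h =>
    ⟨fun i => ⟨h.1 i, (le_maxVal x i).trans (maxVal_le_of_forall_exists_eq h.2)⟩, h.2⟩⟩

lemma notMem_ascbot_of_succ_eq {n : ℕ} {x : Fin n → ℕ} {i : Fin n} (h0 : i.1 ≠ 0)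
    (hi : i.1 + 1 = n) : i ∉ Ascbot n x := by
  rintro (h | ⟨h, -⟩) <;> omega

lemma Avoids132.le_of_lt {n : ℕ} {x : Fin n → ℕ} (hx : Avoids132 n x) {i j k : Fin n}
    (hij : i < j) (hjk : j < k) (hik : x i < x k) : x j ≤ x k :=
  not_lt.1 fun hkj => hx ⟨i, j, k, hij, hjk, hik, hkj⟩

lemma StrictMonoOn.apply_eq_card_Icc {α : Type*} [LinearOrder α] [LocallyFiniteOrder α]
    {f : α → ℕ} {a b : α} (hf : StrictMonoOn f (Set.Icc a b)) (ha : 1 ≤ f a)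
    (hsurj : ∀ v, 1 ≤ v → v ≤ f b → ∃ i ∈ Set.Icc a b, f i = v) {j : α}
    (hj : j ∈ Set.Icc a b) : f j = #(Icc a j) := by
  have hsub : Set.Icc a j ⊆ Set.Icc a b := Set.Icc_subset_Icc_right hj.2
  apply le_antisymm
  · calc f j = #(Icc 1 (f j)) := by simp
      _ ≤ #(Icc a j) := card_le_card_of_surjOn f fun v hv => by
          obtain ⟨hv1, hvj⟩ := mem_Icc.1 hv
          obtain ⟨i, hi, rfl⟩ :=
            hsurj v hv1 (hvj.trans (hf.monotoneOn hj ⟨hj.1.trans hj.2, le_rfl⟩ hj.2))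
          exact ⟨i, by simpa using ⟨hi.1, not_lt.1 fun hji => (hf hj hi hji).not_ge hvj⟩, rfl⟩
  · calc #(Icc a j) ≤ #(Icc 1 (f j)) := card_le_card_of_injOn f (fun i hi => by
          simp only [coe_Icc, Set.mem_Icc] at hi ⊢
          exact ⟨ha.trans (hf.monotoneOn ⟨le_rfl, hj.1.trans hj.2⟩ (hsub hi) hi.1),
            hf.monotoneOn (hsub hi) hj hi.2⟩) (by simpa using hf.injOn.mono hsub)
      _ = f j := by simp

namespace IsRAS

variable {n : ℕ} {x : Fin n → ℕ}

lemma mem_nub_of_lt_succ (hx : IsRAS n x) {i : Fin n} (h : i.1 + 1 < n)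
    (hlt : x i < x ⟨i + 1, h⟩) : i ∈ Nub n x :=
  hx.2 ▸ Or.inr ⟨h, hlt⟩

lemma lt_succ_of_mem_nub (hx : IsRAS n x) {i : Fin n} (h0 : i.1 ≠ 0) (h : i.1 + 1 < n)
    (hi : i ∈ Nub n x) : x i < x ⟨i + 1, h⟩ := by
  rw [← hx.2] at hi
  obtain hi | ⟨_, hlt⟩ := hi
  · exact absurd hi h0
  · exact hlt

lemma exists_lt_eq_of_succ_eq (hx : IsRAS n x) {i : Fin n} (h0 : i.1 ≠ 0) (hi : i.1 + 1 = n) :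
    ∃ j < i, x j = x i := by
  have : i ∉ Nub n x := hx.2 ▸ notMem_ascbot_of_succ_eq h0 hi
  simpa [Nub] using this

/-- An entry whose value occurs neither earlier in the stretch nor before it is new, hence an
ascent bottom; so such a stretch increases. -/
lemma strictMonoOn_Icc (hx : IsRAS n x) {a b : Fin n} (ha : a.1 ≠ 0)
    (hnew : ∀ i j, i < a → a ≤ j → j < b → x i ≠ x j) : StrictMonoOn x (Set.Icc a b) := by
  have key : ∀ t : ℕ, ∀ (ht : a.1 + t ≤ b.1) (i : Fin n), a ≤ i → i.1 < a.1 + t →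
      x i < x ⟨a.1 + t, by omega⟩ := by
    intro t
    induction t with
    | zero => intro _ i h1 h2; omega
    | succ t ih =>
      intro ht i hai hi
      have hnub : (⟨a.1 + t, by omega⟩ : Fin n) ∈ Nub n x := fun j hj => by
        by_cases hja : j < a
        · exact hnew j _ hja (by simp only [Fin.le_def]; omega) (by simp only [Fin.lt_def]; omega)
        · exact (ih (by omega) j (by omega) hj).ne
      have hstep := hx.lt_succ_of_mem_nub (by simp only; omega) (by simp only; omega) hnub
      rcases Nat.lt_or_ge i.1 (a.1 + t) with hit | hit
      · exact (ih (by omega) i hai hit).trans hstep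
      · rw [show i = ⟨a.1 + t, by omega⟩ from Fin.ext (by simp only; omega)]
        exact hstep
  rintro p ⟨hap, -⟩ q ⟨haq, hqb⟩ hpq
  have hq' : (⟨a.1 + (q.1 - a.1), by omega⟩ : Fin n) = q := Fin.ext (by simp only; omega)
  exact hq' ▸ key (q.1 - a.1) (by omega) p hap (by omega)

end IsRAS

def ras132 (m : ℕ) : Set (Fin m → ℕ) := {y | IsRAS m y ∧ Avoids132 m y}

def ras132Top (n : ℕ) : Set (Fin n → ℕ) :=
  {x | IsRAS n x ∧ Avoids132 n x ∧ ∃ h : 2 ≤ n,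
    x ⟨n - 2, by omega⟩ < maxVal n x ∧ x ⟨n - 1, by omega⟩ = maxVal n x}

def withStaircase (n m k : ℕ) (y : Fin m → ℕ) : Fin n → ℕ := fun j =>
  if h : j.1 < m then y ⟨j, h⟩ + k
  else if j.1 + 1 < n then j.1 - m + 1
  else maxVal m y + k

section withStaircase

variable {n m k : ℕ} {y : Fin m → ℕ}

lemma withStaircase_of_lt {j : Fin n} (h : j.1 < m) :
    withStaircase n m k y j = y ⟨j, h⟩ + k :=
  dif_pos h

lemma withStaircase_castLE (h : m ≤ n) (j : Fin m) :
    withStaircase n m k y (j.castLE h) = y j + k :=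
  withStaircase_of_lt (j := j.castLE h) j.2

lemma withStaircase_of_le {j : Fin n} (h₁ : m ≤ j.1) (h₂ : j.1 + 1 < n) :
    withStaircase n m k y j = j.1 - m + 1 := by
  simp [withStaircase, h₂, h₁]

lemma withStaircase_of_succ_eq (hmk : m + k + 1 = n) {j : Fin n} (h : j.1 + 1 = n) :
    withStaircase n m k y j = maxVal m y + k := by
  simp [withStaircase, show ¬ j.1 < m by omega, h]

lemma withStaircase_cases (hmk : m + k + 1 = n) (j : Fin n) :
    (∃ h : j.1 < m, withStaircase n m k y j = y ⟨j, h⟩ + k) ∨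
    (m ≤ j.1 ∧ j.1 + 1 < n ∧ withStaircase n m k y j = j.1 - m + 1) ∨
    (j.1 + 1 = n ∧ withStaircase n m k y j = maxVal m y + k) := by
  by_cases h₁ : j.1 < m
  · exact Or.inl ⟨h₁, withStaircase_of_lt h₁⟩
  by_cases h₂ : j.1 + 1 < n
  · exact Or.inr (Or.inl ⟨by omega, h₂, withStaircase_of_le (by omega) h₂⟩)
  · exact Or.inr (Or.inr ⟨by omega, withStaircase_of_succ_eq hmk (by omega)⟩)

lemma withStaircase_le_withStaircase (hmk : m + k + 1 = n) {p q : Fin n} (hp : m ≤ p.1)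
    (hpq : p ≤ q) : withStaircase n m k y p ≤ withStaircase n m k y q := by
  rcases withStaircase_cases (y := y) hmk p with ⟨h, -⟩ | ⟨-, hp', hxp⟩ | ⟨hp', -⟩
  · omega
  · rcases withStaircase_cases (y := y) hmk q with ⟨h, -⟩ | ⟨-, -, hxq⟩ | ⟨-, hxq⟩ <;> omega
  · rw [show p = q by omega]

lemma withStaircase_lt_withStaircase (hmk : m + k + 1 = n) (hy : 1 ≤ maxVal m y) {p q : Fin n}
    (hp : m ≤ p.1) (hpq : p < q) : withStaircase n m k y p < withStaircase n m k y q := by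
  rw [withStaircase_of_le hp (by omega)]
  rcases withStaircase_cases (y := y) hmk q with ⟨h, -⟩ | ⟨-, -, hxq⟩ | ⟨-, hxq⟩ <;> omega

lemma maxVal_withStaircase (hmk : m + k + 1 = n) :
    maxVal n (withStaircase n m k y) = maxVal m y + k := by
  apply le_antisymm
  · refine Finset.sup_le fun j _ => ?_
    rcases withStaircase_cases (y := y) hmk j with ⟨h, hx⟩ | ⟨hj, hj', hx⟩ | ⟨-, hx⟩
    · rw [hx]
      exact Nat.add_le_add_right (le_maxVal y _) k
    · omega
    · omega
  · exact (withStaircase_of_succ_eq hmk (j := ⟨n - 1, by omega⟩) (by simp only; omega)).symm.trans_le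
      (le_maxVal _ _)

lemma mem_nub_withStaircase_iff (hmk : m + k + 1 = n) {i : Fin n} (hi : i.1 < m) :
    i ∈ Nub n (withStaircase n m k y) ↔ ⟨i, hi⟩ ∈ Nub m y := by
  simp only [Nub, Set.mem_ofPred_eq]
  constructor
  · intro H j hj hji
    refine H ⟨j, by omega⟩ (by simp only [Fin.lt_def] at hj ⊢; exact hj) ?_
    rw [withStaircase_of_lt (j := (⟨j, by omega⟩ : Fin n)) j.2, withStaircase_of_lt hi]
    simp [hji]
  · intro H j hj hji
    rw [withStaircase_of_lt (by omega), withStaircase_of_lt hi] at hji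
    exact H ⟨j, by omega⟩ hj (by omega)

lemma mem_ascbot_withStaircase_iff (hmk : m + k + 1 = n) (hk : 1 ≤ k) {i : Fin n}
    (hi : i.1 < m) : i ∈ Ascbot n (withStaircase n m k y) ↔ ⟨i, hi⟩ ∈ Ascbot m y := by
  simp only [Ascbot, Set.mem_ofPred_eq]
  refine or_congr Iff.rfl ⟨fun ⟨h, hlt⟩ => ?_, fun ⟨h, hlt⟩ => ⟨by omega, ?_⟩⟩
  · rw [withStaircase_of_lt hi] at hlt
    by_cases him : i.1 + 1 < m
    · rw [withStaircase_of_lt him] at hlt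
      exact ⟨him, by simpa using hlt⟩
    · rw [withStaircase_of_le (j := ⟨i + 1, h⟩) (by simp only; omega) (by simp only; omega)] at hlt
      simp only at hlt
      omega
  · rw [withStaircase_of_lt hi, withStaircase_of_lt h]
    simpa using hlt

lemma mem_ascbot_withStaircase_of_le (hmk : m + k + 1 = n) (hy : 1 ≤ maxVal m y) {i : Fin n}
    (h₁ : m ≤ i.1) (h₂ : i.1 + 1 < n) : i ∈ Ascbot n (withStaircase n m k y) :=
  Or.inr ⟨h₂, withStaircase_lt_withStaircase hmk hy h₁ (by simp [Fin.lt_def])⟩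

lemma mem_nub_withStaircase_of_le (hmk : m + k + 1 = n) (hpos : ∀ j, 1 ≤ y j) {i : Fin n}
    (h₁ : m ≤ i.1) (h₂ : i.1 + 1 < n) : i ∈ Nub n (withStaircase n m k y) := by
  intro j hj
  rw [withStaircase_of_le h₁ h₂]
  by_cases hjm : j.1 < m
  · rw [withStaircase_of_lt hjm]
    have := hpos ⟨j, hjm⟩
    omega
  · rw [withStaircase_of_le (by omega) (by omega)]
    omega

lemma withStaircase_penultimate (hmk : m + k + 1 = n) (hk : 1 ≤ k) :
    withStaircase n m k y ⟨n - 2, by omega⟩ = k := by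
  rw [withStaircase_of_le (by simp only; omega) (by simp only; omega)]
  simp only
  omega

lemma pos_of_mem_nub_withStaircase (hmk : m + k + 1 = n) (hk : 1 ≤ k)
    (h : (⟨n - 2, by omega⟩ : Fin n) ∈ Nub n (withStaircase n m k y)) (j : Fin m) : 1 ≤ y j := by
  by_contra hj
  refine h (j.castLE (by omega)) (by simp only [Fin.lt_def, Fin.val_castLE]; omega) ?_
  rw [withStaircase_castLE, withStaircase_penultimate hmk hk]
  omega

lemma notMem_nub_withStaircase_of_succ_eq (hmk : m + k + 1 = n) (hm : 0 < m) {i : Fin n}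
    (hi : i.1 + 1 = n) : i ∉ Nub n (withStaircase n m k y) := by
  obtain ⟨j, hj⟩ := exists_eq_maxVal y hm
  intro h
  refine h (j.castLE (by omega)) (by simp only [Fin.lt_def, Fin.val_castLE]; omega) ?_
  rw [withStaircase_castLE, withStaircase_of_succ_eq hmk hi, hj]

lemma avoids132_withStaircase_iff (hmk : m + k + 1 = n) :
    Avoids132 n (withStaircase n m k y) ↔ Avoids132 m y := by
  have hmn : m ≤ n := by omega
  constructor
  · rintro hx ⟨a, b, c, hab, hbc, hac, hcb⟩
    refine hx ⟨a.castLE hmn, b.castLE hmn, c.castLE hmn, hab, hbc, ?_, ?_⟩ <;>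
      simp only [withStaircase_castLE] <;> omega
  · rintro hy ⟨a, b, c, hab, hbc, hac, hcb⟩
    by_cases hb : m ≤ b.1
    · exact (withStaircase_le_withStaircase hmk hb hbc.le).not_gt hcb
    rw [withStaircase_of_lt (j := a) (by omega)] at hac
    rw [withStaircase_of_lt (j := b) (by omega)] at hcb
    rcases withStaircase_cases (y := y) hmk c with ⟨hc, hxc⟩ | ⟨hc, hc', hxc⟩ | ⟨-, hxc⟩
    · rw [hxc] at hac hcb
      exact hy ⟨⟨a, by omega⟩, ⟨b, by omega⟩, ⟨c, hc⟩, hab, hbc, by omega, by omega⟩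
    · omega
    · have := le_maxVal y ⟨b, by omega⟩
      omega

lemma ascbot_withStaircase_eq_nub_iff (hmk : m + k + 1 = n) (hm : 0 < m) (hk : 1 ≤ k)
    (hpos : ∀ j, 1 ≤ y j) :
    Ascbot n (withStaircase n m k y) = Nub n (withStaircase n m k y) ↔ Ascbot m y = Nub m y := by
  constructor
  · intro h
    ext i
    exact (mem_ascbot_withStaircase_iff hmk hk (i := ⟨i, by omega⟩) i.2).symm.trans
      (h ▸ mem_nub_withStaircase_iff hmk (i := ⟨i, by omega⟩) i.2)
  · intro h
    ext i
    by_cases him : i.1 < m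
    · exact (mem_ascbot_withStaircase_iff hmk hk him).trans
        (h ▸ (mem_nub_withStaircase_iff hmk him).symm)
    by_cases hin : i.1 + 1 < n
    · exact iff_of_true
        (mem_ascbot_withStaircase_of_le hmk ((hpos ⟨0, hm⟩).trans (le_maxVal y _))
          (by omega) hin)
        (mem_nub_withStaircase_of_le hmk hpos (by omega) hin)
    · exact iff_of_false (notMem_ascbot_of_succ_eq (by omega) (by omega))
        (notMem_nub_withStaircase_of_succ_eq hmk hm (by omega))

lemma isCayley_withStaircase_iff (hmk : m + k + 1 = n) (hm : 0 < m) (hpos : ∀ j, 1 ≤ y j) :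
    IsCayley n (withStaircase n m k y) ↔ IsCayley m y := by
  rw [isCayley_iff, isCayley_iff, maxVal_withStaircase hmk]
  refine and_congr (iff_of_true (fun j => ?_) hpos) ⟨fun h v hv₁ hv => ?_, fun h v hv₁ hv => ?_⟩
  · rcases withStaircase_cases (y := y) hmk j with ⟨h, hx⟩ | ⟨_, _, hx⟩ | ⟨_, hx⟩
    · exact hx ▸ (hpos _).trans (Nat.le_add_right _ _)
    · omega
    · exact hx ▸ (hpos ⟨0, hm⟩).trans ((le_maxVal y _).trans (Nat.le_add_right _ _))
  · obtain ⟨i, hi⟩ := h (v + k) (by omega) (by omega)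
    rcases withStaircase_cases (y := y) hmk i with ⟨hi', hx⟩ | ⟨_, _, hx⟩ | ⟨_, hx⟩
    · exact ⟨⟨i, hi'⟩, by omega⟩
    · omega
    · exact (exists_eq_maxVal y hm).imp fun j hj => by omega
  · by_cases hvk : v ≤ k
    · refine ⟨⟨m + v - 1, by omega⟩, ?_⟩
      rw [withStaircase_of_le (by simp only; omega) (by simp only; omega)]
      simp only
      omega
    · obtain ⟨j, hj⟩ := h (v - k) (by omega) (by omega)
      exact ⟨j.castLE (by omega), by rw [withStaircase_castLE]; omega⟩

theorem withStaircase_mem_ras132Top_iff (hmk : m + k + 1 = n) (hm : 0 < m) (hk : 1 ≤ k) :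
    withStaircase n m k y ∈ ras132Top n ↔ y ∈ ras132 m := by
  have hlast : withStaircase n m k y ⟨n - 1, by omega⟩ = maxVal m y + k :=
    withStaircase_of_succ_eq hmk (by simp only; omega)
  simp only [ras132Top, ras132, Set.mem_ofPred_eq, maxVal_withStaircase hmk,
    withStaircase_penultimate hmk hk, hlast]
  constructor
  · rintro ⟨⟨hcay, hAN⟩, hav, -, hlt, -⟩
    have hpos := pos_of_mem_nub_withStaircase hmk hk (hAN ▸
      mem_ascbot_withStaircase_of_le hmk (by omega) (by simp only; omega) (by simp only; omega))
    exact ⟨⟨(isCayley_withStaircase_iff hmk hm hpos).1 hcay,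
      (ascbot_withStaircase_eq_nub_iff hmk hm hk hpos).1 hAN⟩,
      (avoids132_withStaircase_iff hmk).1 hav⟩
  · rintro ⟨⟨hcay, hAN⟩, hav⟩
    have hpos := (isCayley_iff.1 hcay).1
    have hy := (hpos ⟨0, hm⟩).trans (le_maxVal y _)
    exact ⟨⟨(isCayley_withStaircase_iff hmk hm hpos).2 hcay,
      (ascbot_withStaircase_eq_nub_iff hmk hm hk hpos).2 hAN⟩,
      (avoids132_withStaircase_iff hmk).2 hav,
      by omega, by omega, trivial⟩

end withStaircase

lemma Avoids132.exists_larger_then_smaller {n : ℕ} {x : Fin n → ℕ} (hx : Avoids132 n x) {c : Fin n}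
    (hc : ∀ i < c, x i ≠ x c) :
    ∃ m ≤ c, (∀ j < m, x c < x j) ∧ ∀ j, m ≤ j → j < c → x j < x c := by
  classical
  set T := univ.filter fun j => j ≤ c ∧ x j ≤ x c
  have hcT : c ∈ T := by simp [T]
  set m := T.min' ⟨c, hcT⟩
  have hmc : m ≤ c := T.min'_le c hcT
  refine ⟨m, hmc, fun j hj => not_le.1 fun hle => ?_, fun j hmj hjc => ?_⟩
  · exact (T.min'_le j (by simp [T, hle, (hj.trans_le hmc).le])).not_gt hj
  · have hxm : x m ≤ x c := (by simpa [T] using T.min'_mem ⟨c, hcT⟩ : m ≤ c ∧ x m ≤ x c).2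
    have hxm' : x m < x c := lt_of_le_of_ne hxm (hc _ (hmj.trans_lt hjc))
    rcases hmj.lt_or_eq with h | h
    · exact lt_of_le_of_ne (hx.le_of_lt h hjc hxm') (hc j hjc)
    · exact h ▸ hxm'

section ras132Top

variable {n : ℕ} {x : Fin n → ℕ}

lemma apply_eq_maxVal_of_mem_ras132Top (hx : x ∈ ras132Top n) {i : Fin n} (hi : i.1 + 1 = n) :
    x i = maxVal n x :=
  (congrArg x (Fin.ext (show i.1 = n - 1 by omega))).trans hx.2.2.2.2

lemma apply_ne_penultimate_of_mem_ras132Top (hn : 2 ≤ n) (hx : x ∈ ras132Top n) :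
    ∀ i < (⟨n - 2, by omega⟩ : Fin n), x i ≠ x ⟨n - 2, by omega⟩ :=
  hx.1.mem_nub_of_lt_succ (by simp only; omega)
    (hx.2.2.2.1.trans_eq (apply_eq_maxVal_of_mem_ras132Top hx (by simp only; omega)).symm)

lemma exists_lt_penultimate_eq_maxVal (hn : 2 ≤ n) (hx : x ∈ ras132Top n) :
    ∃ i < (⟨n - 2, by omega⟩ : Fin n), x i = maxVal n x := by
  have hlast := apply_eq_maxVal_of_mem_ras132Top hx (i := ⟨n - 1, by omega⟩) (by simp only; omega)
  obtain ⟨j, hj, hxj⟩ := hx.1.exists_lt_eq_of_succ_eq (i := ⟨n - 1, by omega⟩)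
    (by simp only; omega) (by simp only; omega)
  refine ⟨j, lt_of_le_of_ne (by simp only [Fin.lt_def, Fin.le_def] at hj ⊢; omega) ?_,
    hxj.trans hlast⟩
  rintro rfl
  exact hx.2.2.2.1.ne (hxj.trans hlast)

lemma exists_staircase_of_mem_ras132Top (hn : 2 ≤ n) (hx : x ∈ ras132Top n) :
    ∃ m ≤ (⟨n - 2, by omega⟩ : Fin n), (∀ j < m, x ⟨n - 2, by omega⟩ < x j) ∧
      (∃ i < m, x i = maxVal n x) ∧
      ∀ j ∈ Set.Icc m ⟨n - 2, by omega⟩, x j = j + 1 - m := by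
  set c : Fin n := ⟨n - 2, by omega⟩
  obtain ⟨hpos, hsurj⟩ := isCayley_iff.1 hx.1.1
  obtain ⟨i₀, hi₀, hxi₀⟩ := exists_lt_penultimate_eq_maxVal hn hx
  obtain ⟨m, hmc, hbig, hsmall⟩ :=
    hx.2.1.exists_larger_then_smaller (apply_ne_penultimate_of_mem_ras132Top hn hx)
  have hlt : x c < maxVal n x := hx.2.2.2.1
  have hi₀m : i₀ < m := not_le.1 fun h => (hsmall i₀ h hi₀).not_gt (hxi₀ ▸ hlt)
  have hmono : StrictMonoOn x (Set.Icc m c) := hx.1.strictMonoOn_Icc (by omega)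
    fun i j hi hj hjc => ((hsmall j hj hjc).trans (hbig i hi)).ne'
  refine ⟨m, hmc, hbig, ⟨i₀, hi₀m, hxi₀⟩, fun j hj => ?_⟩
  rw [hmono.apply_eq_card_Icc (hpos m) (fun v hv₁ hv => ?_) hj, Fin.card_Icc]
  obtain ⟨i, hi⟩ := hsurj v hv₁ (hv.trans hlt.le)
  refine ⟨i, ⟨not_lt.1 fun h => (hbig i h).not_ge (hi ▸ hv), not_lt.1 fun h => ?_⟩, hi⟩
  rw [apply_eq_maxVal_of_mem_ras132Top hx (by simp only [c, Fin.lt_def] at h; omega)] at hi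
  omega

theorem exists_eq_withStaircase (hn : 2 ≤ n) (hx : x ∈ ras132Top n) :
    ∃ m, 0 < m ∧ m + x ⟨n - 2, by omega⟩ + 1 = n ∧
      x ∈ Set.range (withStaircase n m (x ⟨n - 2, by omega⟩)) := by
  obtain ⟨m, hmc, hbig, ⟨i₀, hi₀m, hxi₀⟩, hwin⟩ := exists_staircase_of_mem_ras132Top hn hx
  set k := x ⟨n - 2, by omega⟩
  have hmk : m.1 + k + 1 = n := by
    have := hwin _ ⟨hmc, le_rfl⟩
    simp only at this
    omega
  let y : Fin m → ℕ := fun j => x (j.castLE (by omega)) - k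
  have hy (j : Fin m) : y j + k = x (j.castLE (by omega)) :=
    Nat.sub_add_cancel (hbig _ j.2).le
  have hmaxy : maxVal m y + k = maxVal n x := by
    refine le_antisymm ?_ ?_
    · have : maxVal m y ≤ maxVal n x - k :=
        Finset.sup_le fun j _ => Nat.sub_le_sub_right (le_maxVal x _) k
      have := hx.2.2.2.1
      omega
    · exact hxi₀.symm.trans_le ((hy ⟨i₀, hi₀m⟩).symm.trans_le
        (Nat.add_le_add_right (le_maxVal y _) k))
  refine ⟨m, by omega, hmk, y, funext fun j => ?_⟩
  rcases withStaircase_cases (y := y) hmk j with ⟨hj, hxj⟩ | ⟨hj, hj', hxj⟩ | ⟨hj, hxj⟩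
  · rw [hxj]
    exact hy ⟨j, hj⟩
  · rw [hxj, hwin j ⟨by simp only [Fin.le_def]; omega, by simp only [Fin.le_def]; omega⟩]
    omega
  · rw [hxj, apply_eq_maxVal_of_mem_ras132Top hx hj, hmaxy]

end ras132Top

lemma withStaircase_injective {n m k : ℕ} (hmn : m ≤ n) :
    Function.Injective (withStaircase n m k) := fun y y' h =>
  funext fun j => by simpa [withStaircase_castLE] using congrFun h (j.castLE hmn)

lemma ras132Top_finite (n : ℕ) : (ras132Top n).Finite :=
  (Set.Finite.pi' fun _ => Set.finite_Iic n).subset fun _ hx i => (hx.1.1.1 i).2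

lemma g_eq_ncard {m : ℕ} (hm : 0 < m) : g m = (ras132 m).ncard := by
  obtain ⟨m, rfl⟩ := Nat.exists_eq_add_one_of_ne_zero hm.ne'
  rfl

lemma ncard_eq_sum_ncard_fiberwise {α β : Type*} [DecidableEq β] {S : Set α} (hS : S.Finite)
    {f : α → β} {t : Finset β} (h : ∀ x ∈ S, f x ∈ t) :
    S.ncard = ∑ b ∈ t, {x ∈ S | f x = b}.ncard := by
  rw [Set.ncard_eq_toFinset_card S hS,
    card_eq_sum_card_fiberwise fun x hx => h x (by simpa using hx)]
  refine sum_congr rfl fun b _ => ?_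
  rw [← Set.ncard_coe_finset]
  congr
  ext
  simp

theorem ncard_ras132Top_penultimate_eq {n k : ℕ} (hn : 2 ≤ n) (hk : 1 ≤ k) :
    {x ∈ ras132Top n | x ⟨n - 2, by omega⟩ = k}.ncard = g (n - 1 - k) := by
  by_cases hkn : k + 2 ≤ n
  · have hm : 0 < n - 1 - k := by omega
    have hmk : n - 1 - k + k + 1 = n := by omega
    have hfiber : {x ∈ ras132Top n | x ⟨n - 2, by omega⟩ = k} =
        withStaircase n (n - 1 - k) k '' ras132 (n - 1 - k) := by
      ext x
      constructor
      · rintro ⟨hx, hxk⟩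
        obtain ⟨m, -, hm', y, hxy⟩ := exists_eq_withStaircase hn hx
        rw [hxk] at hm' hxy
        obtain rfl : m = n - 1 - k := by omega
        exact ⟨y, (withStaircase_mem_ras132Top_iff hmk hm hk).1 (hxy ▸ hx), hxy⟩
      · rintro ⟨y, hy, rfl⟩
        exact ⟨(withStaircase_mem_ras132Top_iff hmk hm hk).2 hy, withStaircase_penultimate hmk hk⟩
    rw [hfiber, Set.ncard_image_of_injective _ (withStaircase_injective (by omega)), g_eq_ncard hm]
  · have hempty : {x ∈ ras132Top n | x ⟨n - 2, by omega⟩ = k} = ∅ :=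
      Set.eq_empty_of_forall_notMem fun x ⟨hx, hxk⟩ => by
        obtain ⟨m, hm, hmk, -⟩ := exists_eq_withStaircase hn hx
        omega
    rw [hempty, Set.ncard_empty, show n - 1 - k = 0 by omega, g]

theorem stmt19 (n : ℕ) (hn : 2 ≤ n) :
    s n = ∑ k ∈ Finset.Icc 1 n, g (n - 1 - k) := by
  rw [show s n = (ras132Top n).ncard from rfl,
    ncard_eq_sum_ncard_fiberwise (ras132Top_finite n) (f := fun x => x ⟨n - 2, by omega⟩)
      fun x hx => mem_Icc.2 (hx.1.1.1 _)]
  exact sum_congr rfl fun k hk => ncard_ras132Top_penultimate_eq hn (mem_Icc.1 hk).1
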